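/- The operator D̂ defined by (D̂x)(s) = Dx_s maps BU into BU, is a bounded linear operator for the supremum norm, and for each r > 0 it is uniformly continuous on B_r for the compact-open topology: given ε > 0 there is δ(r) > 0 such that d(D̂x_1, D̂x_2) < ε for all x_1, x_2 ∈ B_r with d(x_1,x_2) < δ(r). -/

import Mathlib

open MeasureTheory Filter Set

/-- `x` is bounded and uniformly continuous on `(-∞,0]` (membership in `BU`,
where only the restriction of `x` to `(-∞,0]` is relevant). -/
def IsBU (m : ℕ) (x : ℝ → Fin m → ℝ) : Prop :=
  (∃ C : ℝ, ∀ s : ℝ, s ≤ 0 → ‖x s‖ ≤ C) ∧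
  ∀ ε > (0:ℝ), ∃ δ > (0:ℝ), ∀ s : ℝ, s ≤ 0 → ∀ s' : ℝ, s' ≤ 0 →
    |s - s'| < δ → ‖x s - x s'‖ < ε

/-- the supremum norm `‖x‖_∞ = sup_{s ≤ 0} ‖x(s)‖`. -/
noncomputable def supNorm (m : ℕ) (x : ℝ → Fin m → ℝ) : ℝ :=
  ⨆ s : Set.Iic (0:ℝ), ‖x (s : ℝ)‖

/-- time shift: `shift m x t = x_t`, where `x_t(s) = x(t+s)`. -/
def shift (m : ℕ) (x : ℝ → Fin m → ℝ) (t : ℝ) : ℝ → Fin m → ℝ :=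
  fun s => x (t + s)

/-- The operator `Dx = x(0) - ∫_{-∞}^0 [dν(s)] x(s)`, where the matrix of real
(signed) Borel measures `ν` is given through a positive part `νp` and a
negative part `νn` (Jordan decomposition), i.e. `ν i j = νp i j - νn i j`. -/
noncomputable def Dop (m : ℕ) (νp νn : Fin m → Fin m → Measure ℝ)
    (x : ℝ → Fin m → ℝ) : Fin m → ℝ :=
  fun i => x 0 i - ∑ j : Fin m,
    ((∫ s in Set.Iic (0:ℝ), x s j ∂(νp i j)) - ∫ s in Set.Iic (0:ℝ), x s j ∂(νn i j))

/-- the measures `ν_ij` have finite total variation and `|ν_ij|({0}) = 0`. -/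
def NuCond (m : ℕ) (νp νn : Fin m → Fin m → Measure ℝ) : Prop :=
  (∀ i j, νp i j Set.univ ≠ ⊤) ∧ (∀ i j, νn i j Set.univ ≠ ⊤) ∧
  (∀ i j, νp i j {0} = 0) ∧ (∀ i j, νn i j {0} = 0)

/-- `D` is stable: there is a continuous `c : [0,∞) → [0,∞)` with `c(t) → 0`
as `t → ∞` such that every continuous `x : ℝ → ℝ^m` with `x_0 ∈ BU` and
`D x_t = 0` for all `t ≥ 0` satisfies `‖x(t)‖ ≤ c(t) ‖x_0‖_∞` for all `t ≥ 0`. -/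
def IsStableOp (m : ℕ) (D : (ℝ → Fin m → ℝ) → Fin m → ℝ) : Prop :=
  ∃ c : ℝ → ℝ, ContinuousOn c (Set.Ici 0) ∧ (∀ t : ℝ, 0 ≤ t → 0 ≤ c t) ∧
    Filter.Tendsto c Filter.atTop (nhds 0) ∧
    ∀ x : ℝ → Fin m → ℝ, Continuous x → IsBU m x →
      (∀ t : ℝ, 0 ≤ t → D (shift m x t) = 0) →
      ∀ t : ℝ, 0 ≤ t → ‖x t‖ ≤ c t * supNorm m x

/-- the convolution operator `D̂`, `(D̂x)(s) = D x_s`. -/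
noncomputable def Dhat (m : ℕ) (νp νn : Fin m → Fin m → Measure ℝ)
    (x : ℝ → Fin m → ℝ) : ℝ → Fin m → ℝ :=
  fun s => Dop m νp νn (shift m x s)

/-- the seminorm `‖x‖_n = sup_{s ∈ [-n,0]} ‖x(s)‖`. -/
noncomputable def normOn (m : ℕ) (n : ℕ) (x : ℝ → Fin m → ℝ) : ℝ :=
  ⨆ s : Set.Icc (-(n:ℝ)) 0, ‖x (s : ℝ)‖

/-- the compact-open metric
`d(x,y) = ∑_{n ≥ 1} 2⁻ⁿ ‖x-y‖_n / (1 + ‖x-y‖_n)`. -/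
noncomputable def coDist (m : ℕ) (x y : ℝ → Fin m → ℝ) : ℝ :=
  ∑' n : ℕ, (1/2 : ℝ)^(n+1) *
    (normOn m (n+1) (fun s => x s - y s)) / (1 + normOn m (n+1) (fun s => x s - y s))

/-- `sup_{0 ≤ u ≤ t} ‖h(u)‖`. -/
noncomputable def supOn (m : ℕ) (h : ℝ → Fin m → ℝ) (t : ℝ) : ℝ :=
  ⨆ u : Set.Icc (0:ℝ) t, ‖h (u : ℝ)‖

/-- the order `x ≤_D y`, i.e. `D x_s ≤ D y_s` (componentwise) for all `s ≤ 0`. -/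
def leD (m : ℕ) (νp νn : Fin m → Fin m → Measure ℝ) (x y : ℝ → Fin m → ℝ) : Prop :=
  ∀ s : ℝ, s ≤ 0 → ∀ i, Dhat m νp νn x s i ≤ Dhat m νp νn y s i

/-! Componentwise, `D̂x(s) = D(x_s)` is estimated by splitting the integral over `(-∞,0]` at `-T`:
if `‖x‖ ≤ A` on `[s-T,s]` and `‖x‖ ≤ R` on `(-∞,s]`, then
`‖D̂x(s)‖ ≤ A (1 + |ν|(-∞,0]) + R |ν|(-∞,-T]`.
With `T = 0` this bounds `D̂` for the supremum norm and, applied to `x_s - x_{s'}`, makes `D̂x`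
uniformly continuous. For the compact-open metric, a small `d(x₁,x₂)` makes `x₁ - x₂` small on a
long interval `[-(N+T+1),0]`, while on `B_r` the part `(-∞,-T]` contributes at most
`2r |ν|(-∞,-T]`, which tends to `0` with `T`. So `D̂x₁ - D̂x₂` is small on `[-N,0]`, and the terms
of `d` beyond `N` add at most `2⁻ᴺ`. -/

open Topology

section Norms

variable {m : ℕ}

lemma normOn_nonneg (n : ℕ) (x : ℝ → Fin m → ℝ) : 0 ≤ normOn m n x :=
  Real.iSup_nonneg fun _ => norm_nonneg _

lemma norm_le_normOn {x : ℝ → Fin m → ℝ} {n : ℕ} {C : ℝ}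
    (hC : ∀ s ∈ Icc (-(n : ℝ)) 0, ‖x s‖ ≤ C) {s : ℝ} (hs : s ∈ Icc (-(n : ℝ)) 0) :
    ‖x s‖ ≤ normOn m n x :=
  le_ciSup (f := fun s : Icc (-(n : ℝ)) 0 => ‖x s‖)
    ⟨C, by rintro _ ⟨t, rfl⟩; exact hC t t.2⟩ ⟨s, hs⟩

lemma normOn_le {x : ℝ → Fin m → ℝ} {n : ℕ} {C : ℝ}
    (hC : ∀ s ∈ Icc (-(n : ℝ)) 0, ‖x s‖ ≤ C) : normOn m n x ≤ C :=
  have : Nonempty (Icc (-(n : ℝ)) 0) := ⟨⟨0, by simp⟩⟩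
  ciSup_le fun s => hC s s.2

lemma supNorm_nonneg (x : ℝ → Fin m → ℝ) : 0 ≤ supNorm m x :=
  Real.iSup_nonneg fun _ => norm_nonneg _

lemma supNorm_le {x : ℝ → Fin m → ℝ} {C : ℝ} (hC : ∀ s ≤ 0, ‖x s‖ ≤ C) :
    supNorm m x ≤ C :=
  have : Nonempty (Iic (0 : ℝ)) := ⟨⟨0, mem_Iic.2 le_rfl⟩⟩
  ciSup_le fun s => hC s s.2

lemma IsBU.norm_le_supNorm {x : ℝ → Fin m → ℝ} (hx : IsBU m x) {s : ℝ} (hs : s ≤ 0) :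
    ‖x s‖ ≤ supNorm m x :=
  have ⟨C, hC⟩ := hx.1
  le_ciSup (f := fun s : Iic (0 : ℝ) => ‖x s‖)
    ⟨C, by rintro _ ⟨t, rfl⟩; exact hC t t.2⟩ ⟨s, hs⟩

lemma IsBU.continuousOn {x : ℝ → Fin m → ℝ} (hx : IsBU m x) : ContinuousOn x (Iic 0) := by
  refine Metric.continuousOn_iff.2 fun b hb ε hε => ?_
  obtain ⟨δ, hδ, hxδ⟩ := hx.2 ε hε
  exact ⟨δ, hδ, fun a ha hab => by
    simpa [dist_eq_norm] using hxδ a ha b hb (by rwa [← Real.dist_eq])⟩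

end Norms

section CompactOpenMetric

variable {m : ℕ}

lemma coDist_term_le_pow {a : ℝ} (ha : 0 ≤ a) (n : ℕ) :
    (1 / 2 : ℝ) ^ (n + 1) * a / (1 + a) ≤ (1 / 2) ^ (n + 1) := by
  rw [div_le_iff₀ (by linarith)]
  nlinarith [pow_pos (by norm_num : (0 : ℝ) < 1 / 2) (n + 1)]

lemma coDist_term_le_self {a : ℝ} (ha : 0 ≤ a) (n : ℕ) :
    (1 / 2 : ℝ) ^ (n + 1) * a / (1 + a) ≤ a := by
  rw [div_le_iff₀ (by linarith)]
  nlinarith [pow_le_one₀ (by norm_num : (0 : ℝ) ≤ 1 / 2) (by norm_num) (n := n + 1)]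

lemma summable_coDist_term (x y : ℝ → Fin m → ℝ) :
    Summable fun n : ℕ => (1 / 2 : ℝ) ^ (n + 1) * normOn m (n + 1) (fun s => x s - y s) /
      (1 + normOn m (n + 1) (fun s => x s - y s)) :=
  .of_nonneg_of_le (fun n => by have := normOn_nonneg (n + 1) (fun s => x s - y s); positivity)
    (fun n => coDist_term_le_pow (normOn_nonneg _ _) n)
    ((summable_geometric_two.mul_left (1 / 2)).congr fun n => by ring)

lemma normOn_lt_of_coDist_lt {x y : ℝ → Fin m → ℝ} {n : ℕ} {α : ℝ} (hα : 0 < α)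
    (h : coDist m x y < (1 / 2) ^ (n + 1) * (α / (1 + α))) :
    normOn m (n + 1) (fun s => x s - y s) < α := by
  set a := normOn m (n + 1) (fun s => x s - y s)
  have ha : 0 ≤ a := normOn_nonneg _ _
  have hterm : (1 / 2 : ℝ) ^ (n + 1) * (a / (1 + a)) ≤ coDist m x y := by
    rw [← mul_div_assoc]
    exact (summable_coDist_term x y).le_tsum n fun k _ => by
      have := normOn_nonneg (k + 1) (fun s => x s - y s); positivity
  have hfrac : a / (1 + a) < α / (1 + α) :=
    lt_of_mul_lt_mul_left (hterm.trans_lt h) (by positivity)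
  rw [div_lt_div_iff₀ (by linarith) (by linarith)] at hfrac
  linarith

lemma hasSum_half_pow_add (N : ℕ) :
    HasSum (fun n : ℕ => (1 / 2 : ℝ) ^ (n + N + 1)) ((1 / 2) ^ N) := by
  convert hasSum_geometric_two' ((1 / 2 : ℝ) ^ N) using 1
  funext n
  rw [pow_succ, pow_add, div_pow, one_pow]
  field_simp

lemma coDist_le_of_norm_sub_le {x y : ℝ → Fin m → ℝ} {N : ℕ} {η : ℝ}
    (h : ∀ s ∈ Icc (-(N : ℝ)) 0, ‖x s - y s‖ ≤ η) :
    coDist m x y ≤ N * η + (1 / 2) ^ N := by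
  set f := fun n : ℕ => (1 / 2 : ℝ) ^ (n + 1) * normOn m (n + 1) (fun s => x s - y s) /
      (1 + normOn m (n + 1) (fun s => x s - y s))
  have hf : Summable f := summable_coDist_term x y
  have head : ∑ n ∈ Finset.range N, f n ≤ N * η := by
    refine (Finset.sum_le_card_nsmul _ _ η fun n hn => ?_).trans (by simp)
    refine (coDist_term_le_self (normOn_nonneg _ _) n).trans (normOn_le fun s hs => h s ⟨?_, hs.2⟩)
    have : (n : ℝ) + 1 ≤ N := by exact_mod_cast Finset.mem_range.1 hn
    push_cast at hs
    linarith [hs.1]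
  have tail : ∑' n, f (n + N) ≤ (1 / 2) ^ N :=
    hasSum_le (fun n => coDist_term_le_pow (normOn_nonneg _ _) _)
      ((summable_nat_add_iff (f := f) N).2 hf).hasSum (hasSum_half_pow_add N)
  calc coDist m x y = ∑ n ∈ Finset.range N, f n + ∑' n, f (n + N) :=
        (hf.sum_add_tsum_nat_add N).symm
    _ ≤ N * η + (1 / 2) ^ N := add_le_add head tail

end CompactOpenMetric

lemma norm_setIntegral_Iic_le {E : Type*} [NormedAddCommGroup E] [NormedSpace ℝ E]
    {μ : Measure ℝ} [IsFiniteMeasure μ] {f : ℝ → E} (hf : IntegrableOn f (Iic 0) μ)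
    {T A R : ℝ} (hT : 0 ≤ T) (hA0 : 0 ≤ A) (hA : ∀ u ∈ Ioc (-T) 0, ‖f u‖ ≤ A)
    (hR : ∀ u ≤ -T, ‖f u‖ ≤ R) :
    ‖∫ u in Iic 0, f u ∂μ‖ ≤ A * μ.real (Iic 0) + R * μ.real (Iic (-T)) := by
  have hsplit : Iic (-T) ∪ Ioc (-T) 0 = Iic 0 := Iic_union_Ioc_eq_Iic (by linarith)
  have hmono : μ.real (Ioc (-T) 0) ≤ μ.real (Iic 0) := measureReal_mono Ioc_subset_Iic_self
  calc ‖∫ u in Iic 0, f u ∂μ‖ = ‖(∫ u in Iic (-T), f u ∂μ) + ∫ u in Ioc (-T) 0, f u ∂μ‖ := by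
        rw [← setIntegral_union (Iic_disjoint_Ioc le_rfl) measurableSet_Ioc
          (hf.mono_set (hsplit ▸ subset_union_left)) (hf.mono_set (hsplit ▸ subset_union_right)),
          hsplit]
    _ ≤ R * μ.real (Iic (-T)) + A * μ.real (Ioc (-T) 0) :=
        (norm_add_le _ _).trans (add_le_add
          (norm_setIntegral_le_of_norm_le_const (measure_lt_top _ _) hR)
          (norm_setIntegral_le_of_norm_le_const (measure_lt_top _ _) hA))
    _ ≤ A * μ.real (Iic 0) + R * μ.real (Iic (-T)) := by nlinarith

section Variation

variable {m : ℕ}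

noncomputable def rowVar (νp νn : Fin m → Fin m → Measure ℝ) (i : Fin m) (S : Set ℝ) : ℝ :=
  ∑ j, ((νp i j).real S + (νn i j).real S)

/-- `|ν|(S)`, with the variations `|ν_ij| = νp i j + νn i j` summed over all entries. -/
noncomputable def totalVar (νp νn : Fin m → Fin m → Measure ℝ) (S : Set ℝ) : ℝ :=
  ∑ i, rowVar νp νn i S

lemma rowVar_nonneg (νp νn : Fin m → Fin m → Measure ℝ) (i : Fin m) (S : Set ℝ) :
    0 ≤ rowVar νp νn i S :=
  Finset.sum_nonneg fun _ _ => by positivity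

lemma rowVar_le_totalVar (νp νn : Fin m → Fin m → Measure ℝ) (i : Fin m) (S : Set ℝ) :
    rowVar νp νn i S ≤ totalVar νp νn S :=
  Finset.single_le_sum (fun i _ => rowVar_nonneg νp νn i S) (Finset.mem_univ i)

lemma totalVar_nonneg (νp νn : Fin m → Fin m → Measure ℝ) (S : Set ℝ) :
    0 ≤ totalVar νp νn S :=
  Finset.sum_nonneg fun i _ => rowVar_nonneg νp νn i S

lemma tendsto_measureReal_Iic_neg_nat (μ : Measure ℝ) [IsFiniteMeasure μ] :
    Tendsto (fun T : ℕ => μ.real (Iic (-(T : ℝ)))) atTop (𝓝 0) := by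
  have hempty : ⋂ T : ℕ, Iic (-(T : ℝ)) = ∅ := by
    refine iInter_Iic_eq_empty_iff.2 fun ⟨b, hb⟩ => ?_
    obtain ⟨T, hT⟩ := exists_nat_gt (-b)
    linarith [hb ⟨T, rfl⟩]
  have h := tendsto_measure_iInter_atTop (μ := μ) (fun T => measurableSet_Iic.nullMeasurableSet)
    (fun _ _ hST => Iic_subset_Iic.2 (neg_le_neg (Nat.cast_le.2 hST))) ⟨0, measure_ne_top _ _⟩
  rw [hempty, measure_empty] at h
  exact (ENNReal.tendsto_toReal ENNReal.zero_ne_top).comp h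

lemma tendsto_totalVar_Iic_neg_nat {νp νn : Fin m → Fin m → Measure ℝ}
    [∀ i j, IsFiniteMeasure (νp i j)] [∀ i j, IsFiniteMeasure (νn i j)] :
    Tendsto (fun T : ℕ => totalVar νp νn (Iic (-(T : ℝ)))) atTop (𝓝 0) := by
  have h := tendsto_finsetSum Finset.univ fun i _ => tendsto_finsetSum Finset.univ fun j _ =>
    (tendsto_measureReal_Iic_neg_nat (νp i j)).add (tendsto_measureReal_Iic_neg_nat (νn i j))
  simpa [totalVar, rowVar] using h

end Variation

section Dop

variable {m : ℕ} {νp νn : Fin m → Fin m → Measure ℝ}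

def DopIntegrable (νp νn : Fin m → Fin m → Measure ℝ) (g : ℝ → Fin m → ℝ) : Prop :=
  ∀ i j, IntegrableOn (fun u => g u j) (Iic 0) (νp i j) ∧
    IntegrableOn (fun u => g u j) (Iic 0) (νn i j)

lemma DopIntegrable.sub {g g' : ℝ → Fin m → ℝ} (hg : DopIntegrable νp νn g)
    (hg' : DopIntegrable νp νn g') : DopIntegrable νp νn (g - g') :=
  fun i j => ⟨(hg i j).1.sub (hg' i j).1, (hg i j).2.sub (hg' i j).2⟩

lemma Dop_add {g g' : ℝ → Fin m → ℝ} (hg : DopIntegrable νp νn g)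
    (hg' : DopIntegrable νp νn g') :
    Dop m νp νn (g + g') = Dop m νp νn g + Dop m νp νn g' := by
  funext i
  simp only [Dop, Pi.add_apply, fun j => integral_add (hg i j).1 (hg' i j).1,
    fun j => integral_add (hg i j).2 (hg' i j).2, add_sub_add_comm, Finset.sum_add_distrib]

lemma Dop_sub {g g' : ℝ → Fin m → ℝ} (hg : DopIntegrable νp νn g)
    (hg' : DopIntegrable νp νn g') :
    Dop m νp νn (g - g') = Dop m νp νn g - Dop m νp νn g' := by
  funext i
  simp only [Dop, Pi.sub_apply, fun j => integral_sub (hg i j).1 (hg' i j).1,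
    fun j => integral_sub (hg i j).2 (hg' i j).2, sub_sub_sub_comm, Finset.sum_sub_distrib]

lemma Dop_smul (c : ℝ) (g : ℝ → Fin m → ℝ) : Dop m νp νn (c • g) = c • Dop m νp νn g := by
  funext i
  simp only [Dop, Pi.smul_apply, smul_eq_mul, integral_const_mul, ← mul_sub, ← Finset.mul_sum]

variable [∀ i j, IsFiniteMeasure (νp i j)] [∀ i j, IsFiniteMeasure (νn i j)]

lemma abs_Dop_apply_le {g : ℝ → Fin m → ℝ} (hg : DopIntegrable νp νn g) {T A R : ℝ}
    (hT : 0 ≤ T) (hA0 : 0 ≤ A) (hA : ∀ u ∈ Icc (-T) 0, ‖g u‖ ≤ A) (hR : ∀ u ≤ -T, ‖g u‖ ≤ R)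
    (i : Fin m) :
    |Dop m νp νn g i| ≤ A + A * rowVar νp νn i (Iic 0) + R * rowVar νp νn i (Iic (-T)) := by
  have hA' : ∀ j, ∀ u ∈ Ioc (-T) 0, ‖g u j‖ ≤ A := fun j u hu =>
    (norm_le_pi_norm (g u) j).trans (hA u (Ioc_subset_Icc_self hu))
  have hR' : ∀ j, ∀ u ≤ -T, ‖g u j‖ ≤ R := fun j u hu => (norm_le_pi_norm (g u) j).trans (hR u hu)
  have hrow : ∀ j, |(∫ u in Iic 0, g u j ∂νp i j) - ∫ u in Iic 0, g u j ∂νn i j|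
      ≤ A * ((νp i j).real (Iic 0) + (νn i j).real (Iic 0))
        + R * ((νp i j).real (Iic (-T)) + (νn i j).real (Iic (-T))) := fun j => by
    have hp := norm_setIntegral_Iic_le (hg i j).1 hT hA0 (hA' j) (hR' j)
    have hn := norm_setIntegral_Iic_le (hg i j).2 hT hA0 (hA' j) (hR' j)
    rw [Real.norm_eq_abs] at hp hn
    linarith [abs_sub (∫ u in Iic 0, g u j ∂νp i j) (∫ u in Iic 0, g u j ∂νn i j)]
  have h0 : |g 0 i| ≤ A :=
    (norm_le_pi_norm (g 0) i).trans (hA 0 ⟨by linarith, le_rfl⟩)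
  calc |Dop m νp νn g i|
      ≤ |g 0 i| + ∑ j, |(∫ u in Iic 0, g u j ∂νp i j) - ∫ u in Iic 0, g u j ∂νn i j| :=
        (abs_sub _ _).trans (add_le_add_right (Finset.abs_sum_le_sum_abs _ _) _)
    _ ≤ A + A * rowVar νp νn i (Iic 0) + R * rowVar νp νn i (Iic (-T)) := by
        rw [add_assoc, rowVar, rowVar, Finset.mul_sum, Finset.mul_sum, ← Finset.sum_add_distrib]
        exact add_le_add h0 (Finset.sum_le_sum fun j _ => hrow j)

lemma norm_Dop_le {g : ℝ → Fin m → ℝ} (hg : DopIntegrable νp νn g) {T A R : ℝ}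
    (hT : 0 ≤ T) (hA0 : 0 ≤ A) (hR0 : 0 ≤ R) (hA : ∀ u ∈ Icc (-T) 0, ‖g u‖ ≤ A)
    (hR : ∀ u ≤ -T, ‖g u‖ ≤ R) :
    ‖Dop m νp νn g‖ ≤ A * (1 + totalVar νp νn (Iic 0)) + R * totalVar νp νn (Iic (-T)) := by
  have hK := totalVar_nonneg νp νn (Iic 0)
  have hKT := totalVar_nonneg νp νn (Iic (-T))
  refine (pi_norm_le_iff_of_nonneg (by positivity)).2 fun i => ?_
  rw [Real.norm_eq_abs]
  refine (abs_Dop_apply_le hg hT hA0 hA hR i).trans ?_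
  nlinarith [rowVar_le_totalVar νp νn i (Iic 0), rowVar_le_totalVar νp νn i (Iic (-T))]

lemma norm_Dop_le_of_forall_norm_le {g : ℝ → Fin m → ℝ} (hg : DopIntegrable νp νn g) {C : ℝ}
    (hC0 : 0 ≤ C) (hC : ∀ u ≤ 0, ‖g u‖ ≤ C) :
    ‖Dop m νp νn g‖ ≤ C * (1 + 2 * totalVar νp νn (Iic 0)) := by
  have h := norm_Dop_le hg le_rfl hC0 hC0 (fun u hu => hC u hu.2) (by simpa using hC)
  rw [neg_zero] at h
  linarith

end Dop

section Dhat

variable {m : ℕ} {νp νn : Fin m → Fin m → Measure ℝ}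
  [∀ i j, IsFiniteMeasure (νp i j)] [∀ i j, IsFiniteMeasure (νn i j)]

lemma IsBU.dopIntegrable_shift {x : ℝ → Fin m → ℝ} (hx : IsBU m x) {s : ℝ} (hs : s ≤ 0) :
    DopIntegrable νp νn (shift m x s) := by
  have hmaps : MapsTo (fun u => s + u) (Iic 0) (Iic 0) := fun u (hu : u ≤ 0) =>
    show s + u ≤ 0 by linarith
  have hcont : ∀ j, ContinuousOn (fun u => shift m x s u j) (Iic 0) := fun j =>
    (continuous_apply j).comp_continuousOn
      (hx.continuousOn.comp (continuous_const.add continuous_id).continuousOn hmaps)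
  have hbound : ∀ j, ∀ u ∈ Iic (0 : ℝ), ‖shift m x s u j‖ ≤ supNorm m x := fun j u hu =>
    (norm_le_pi_norm _ j).trans (hx.norm_le_supNorm (hmaps hu))
  have hint : ∀ (μ : Measure ℝ) [IsFiniteMeasure μ] (j : Fin m),
      IntegrableOn (fun u => shift m x s u j) (Iic 0) μ := fun μ _ j =>
    .of_bound (measure_lt_top _ _) ((hcont j).aestronglyMeasurable measurableSet_Iic) _
      ((ae_restrict_iff' measurableSet_Iic).2 (ae_of_all _ (hbound j)))
  exact fun i j => ⟨hint _ j, hint _ j⟩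

lemma IsBU.Dhat_sub {x y : ℝ → Fin m → ℝ} (hx : IsBU m x) (hy : IsBU m y) {s : ℝ}
    (hs : s ≤ 0) : Dhat m νp νn x s - Dhat m νp νn y s = Dhat m νp νn (x - y) s :=
  (Dop_sub (hx.dopIntegrable_shift hs) (hy.dopIntegrable_shift hs)).symm

lemma IsBU.norm_Dhat_le {x : ℝ → Fin m → ℝ} (hx : IsBU m x) {s : ℝ} (hs : s ≤ 0) :
    ‖Dhat m νp νn x s‖ ≤ supNorm m x * (1 + 2 * totalVar νp νn (Iic 0)) :=
  norm_Dop_le_of_forall_norm_le (hx.dopIntegrable_shift hs) (supNorm_nonneg x)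
    fun u hu => hx.norm_le_supNorm (by linarith)

lemma IsBU.supNorm_Dhat_le {x : ℝ → Fin m → ℝ} (hx : IsBU m x) :
    supNorm m (Dhat m νp νn x) ≤ (1 + 2 * totalVar νp νn (Iic 0)) * supNorm m x :=
  supNorm_le fun _ hs => (hx.norm_Dhat_le hs).trans_eq (mul_comm _ _)

lemma isBU_Dhat {x : ℝ → Fin m → ℝ} (hx : IsBU m x) : IsBU m (Dhat m νp νn x) := by
  set L := 1 + 2 * totalVar νp νn (Iic 0)
  have hL : 0 < L := by have := totalVar_nonneg νp νn (Iic 0); positivity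
  refine ⟨⟨_, fun s hs => hx.norm_Dhat_le hs⟩, fun ε hε => ?_⟩
  obtain ⟨δ, hδ, hxδ⟩ := hx.2 (ε / (2 * L)) (by positivity)
  refine ⟨δ, hδ, fun s hs s' hs' hss' => ?_⟩
  calc ‖Dhat m νp νn x s - Dhat m νp νn x s'‖
      = ‖Dop m νp νn (shift m x s - shift m x s')‖ := by
        rw [Dop_sub (hx.dopIntegrable_shift hs) (hx.dopIntegrable_shift hs')]; rfl
    _ ≤ ε / (2 * L) * L :=
        norm_Dop_le_of_forall_norm_le
          ((hx.dopIntegrable_shift hs).sub (hx.dopIntegrable_shift hs')) (by positivity)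
          fun u hu => (hxδ (s + u) (by linarith) (s' + u) (by linarith)
            (by rwa [add_sub_add_right_eq_sub])).le
    _ = ε / 2 := by field_simp
    _ < ε := half_lt_self hε

lemma IsBU.coDist_Dhat_le {x₁ x₂ : ℝ → Fin m → ℝ} (hx₁ : IsBU m x₁) (hx₂ : IsBU m x₂)
    {r : ℝ} (hr₁ : supNorm m x₁ ≤ r) (hr₂ : supNorm m x₂ ≤ r) {N T : ℕ} {α : ℝ} (hα : 0 < α)
    (hd : coDist m x₁ x₂ < (1 / 2) ^ (N + T + 1) * (α / (1 + α))) :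
    coDist m (Dhat m νp νn x₁) (Dhat m νp νn x₂) ≤
      N * (α * (1 + totalVar νp νn (Iic 0)) + 2 * r * totalVar νp νn (Iic (-(T : ℝ))))
        + (1 / 2) ^ N := by
  have hfar : ∀ v ≤ 0, ‖(x₁ - x₂) v‖ ≤ 2 * r := fun v hv =>
    (norm_sub_le _ _).trans (by linarith [hx₁.norm_le_supNorm hv, hx₂.norm_le_supNorm hv])
  have hnear : ∀ v ∈ Icc (-((N + T + 1 : ℕ) : ℝ)) 0, ‖(x₁ - x₂) v‖ ≤ α := fun v hv =>
    (norm_le_normOn (fun w hw => hfar w hw.2) hv).trans (normOn_lt_of_coDist_lt hα hd).le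
  refine coDist_le_of_norm_sub_le fun s hs => ?_
  have hT : (0 : ℝ) ≤ T := Nat.cast_nonneg T
  rw [hx₁.Dhat_sub hx₂ hs.2]
  refine norm_Dop_le ((hx₁.dopIntegrable_shift hs.2).sub (hx₂.dopIntegrable_shift hs.2)) hT
    hα.le (by linarith [supNorm_nonneg x₁]) (fun u hu => hnear (s + u) ⟨?_, ?_⟩)
    (fun u hu => hfar (s + u) (by linarith [hs.2]))
  · push_cast
    linarith [hs.1, hu.1]
  · linarith [hs.2, hu.2]

lemma Dhat_uniformContinuous_coDist (r : ℝ) {ε : ℝ} (hε : 0 < ε) :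
    ∃ δ > 0, ∀ x₁ x₂ : ℝ → Fin m → ℝ, IsBU m x₁ → IsBU m x₂ →
      supNorm m x₁ ≤ r → supNorm m x₂ ≤ r → coDist m x₁ x₂ < δ →
      coDist m (Dhat m νp νn x₁) (Dhat m νp νn x₂) < ε := by
  set K := totalVar νp νn (Iic 0)
  have hK : 0 ≤ K := totalVar_nonneg νp νn (Iic 0)
  obtain ⟨N, hN⟩ : ∃ N : ℕ, (1 / 2 : ℝ) ^ N < ε / 2 :=
    exists_pow_lt_of_lt_one (by positivity) (by norm_num)
  set η := ε / (2 * (N + 1))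
  have hη : 0 < η := by positivity
  have hNη : N * η < ε / 2 := by
    rw [mul_div_assoc', div_lt_div_iff₀ (by positivity) (by norm_num)]
    nlinarith
  obtain ⟨T, hT⟩ : ∃ T : ℕ, 2 * r * totalVar νp νn (Iic (-(T : ℝ))) < η / 2 := by
    have h := (tendsto_totalVar_Iic_neg_nat (νp := νp) (νn := νn)).const_mul (2 * r)
    rw [mul_zero] at h
    exact (h.eventually (gt_mem_nhds (by positivity))).exists
  set α := η / (2 * (1 + K)) with hα
  have hαK : α * (1 + K) = η / 2 := by rw [hα]; field_simp
  refine ⟨(1 / 2) ^ (N + T + 1) * (α / (1 + α)), by positivity,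
    fun x₁ x₂ hx₁ hx₂ hr₁ hr₂ hd => ?_⟩
  calc coDist m (Dhat m νp νn x₁) (Dhat m νp νn x₂)
      ≤ N * (α * (1 + K) + 2 * r * totalVar νp νn (Iic (-(T : ℝ)))) + (1 / 2) ^ N :=
        hx₁.coDist_Dhat_le hx₂ hr₁ hr₂ (by positivity) hd
    _ ≤ N * η + (1 / 2) ^ N := by gcongr; linarith
    _ < ε := by linarith

end Dhat

/-- The operator `D̂`, `(D̂x)(s) = D x_s`, maps `BU` into `BU`,
is linear and bounded for the supremum norm, and is uniformly continuous on
each ball `B_r` for the compact-open metric. -/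
theorem statement6 (m : ℕ) (νp νn : Fin m → Fin m → Measure ℝ)
    (hν : NuCond m νp νn) :
    -- `D̂` maps `BU` into `BU`
    (∀ x : ℝ → Fin m → ℝ, IsBU m x → IsBU m (Dhat m νp νn x)) ∧
    -- `D̂` is linear
    (∀ x y : ℝ → Fin m → ℝ, IsBU m x → IsBU m y → ∀ s : ℝ, s ≤ 0 →
      Dhat m νp νn (x + y) s = Dhat m νp νn x s + Dhat m νp νn y s) ∧
    (∀ (c : ℝ) (x : ℝ → Fin m → ℝ), IsBU m x → ∀ s : ℝ, s ≤ 0 →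
      Dhat m νp νn (c • x) s = c • Dhat m νp νn x s) ∧
    -- `D̂` is bounded for the supremum norm
    (∃ C : ℝ, ∀ x : ℝ → Fin m → ℝ, IsBU m x →
      supNorm m (Dhat m νp νn x) ≤ C * supNorm m x) ∧
    -- `D̂` is uniformly continuous on each `B_r` for the compact-open metric
    (∀ r > (0:ℝ), ∀ ε > (0:ℝ), ∃ δ > (0:ℝ),
      ∀ x₁ x₂ : ℝ → Fin m → ℝ, IsBU m x₁ → IsBU m x₂ →
        supNorm m x₁ ≤ r → supNorm m x₂ ≤ r → coDist m x₁ x₂ < δ →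
        coDist m (Dhat m νp νn x₁) (Dhat m νp νn x₂) < ε) := by
  have : ∀ i j, IsFiniteMeasure (νp i j) := fun i j => ⟨lt_top_iff_ne_top.2 (hν.1 i j)⟩
  have : ∀ i j, IsFiniteMeasure (νn i j) := fun i j => ⟨lt_top_iff_ne_top.2 (hν.2.1 i j)⟩
  exact ⟨fun x hx => isBU_Dhat hx,
    fun x y hx hy s hs => Dop_add (hx.dopIntegrable_shift hs) (hy.dopIntegrable_shift hs),
    fun c x _ s _ => Dop_smul c (shift m x s),
    ⟨_, fun x hx => hx.supNorm_Dhat_le⟩,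
    fun r _ ε hε => Dhat_uniformContinuous_coDist r hε⟩
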